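/- arXiv:2402.15781 — 6 statements merged into one kernel-verified Lean document; each statement's English description precedes it below -/
import Mathlib

section
/- Suppose the affine map F(θ) = (Φ^T D Φ)^{-1} Φ^T D (c + γ^n P^n Φ θ) on ℝ^m has a fixed point problem equivalent to the linear equation Φ^T D c = Φ^T D (I − γ^n P^n) Φ θ. If this map (equivalently the projected Bellman operator restricted to the range of Φ) is a contraction in some norm, then the matrix Φ^T D (I − γ^n P^n) Φ is nonsingular. -/
open Matrix BigOperators

lemma aux_isUnit {k : ℕ} (M : Matrix (Fin k) (Fin k) ℝ)
    (h : ∀ v, M.mulVec v = 0 → v = 0) : IsUnit M := by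
  rw [Matrix.isUnit_iff_isUnit_det, isUnit_iff_ne_zero]
  intro hd
  obtain ⟨v, hv, hMv⟩ := (Matrix.exists_mulVec_eq_zero_iff).mpr hd
  exact hv (h v hMv)

theorem stmt2 {S m : ℕ} [NeZero S] [NeZero m]
    (γ : ℝ) (hγ : γ ∈ Set.Ioo (0:ℝ) 1) (n : ℕ) (hn : 1 ≤ n)
    (Φ : Matrix (Fin S) (Fin m) ℝ) (hΦ : Φ.rank = m)
    (D : Matrix (Fin S) (Fin S) ℝ)
    (hDdiag : ∀ i j, i ≠ j → D i j = 0) (hDpos : ∀ i, 0 < D i i)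
    (P : Matrix (Fin S) (Fin S) ℝ)
    (hPnonneg : ∀ i j, 0 ≤ P i j) (hProw : ∀ i, ∑ j, P i j = 1)
    (c : Fin S → ℝ)
    (F : (Fin m → ℝ) → (Fin m → ℝ))
    (hF : ∀ θ, F θ = ((Φᵀ * D * Φ)⁻¹ * Φᵀ * D).mulVec
        (c + (γ ^ n) • ((P ^ n * Φ).mulVec θ)))
    -- F is a contraction in some norm ν with factor K < 1
    (hcontraction : ∃ (ν : (Fin m → ℝ) → ℝ) (K : ℝ), 0 ≤ K ∧ K < 1 ∧
        (∀ x, ν x = 0 ↔ x = 0) ∧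
        (∀ x y, ν (x + y) ≤ ν x + ν y) ∧
        (∀ (a : ℝ) x, ν (a • x) = |a| * ν x) ∧
        (∀ x y, ν (F x - F y) ≤ K * ν (x - y))) :
    IsUnit (Φᵀ * D * (1 - (γ ^ n) • P ^ n) * Φ) := by
  -- Φ.mulVec is injective
  have hΦinj : ∀ v : Fin m → ℝ, Φ.mulVec v = 0 → v = 0 := by
    intro v hv
    have hrn := LinearMap.finrank_range_add_finrank_ker Φ.mulVecLin
    rw [Module.finrank_pi, Fintype.card_fin] at hrn
    have hrank : Module.finrank ℝ (LinearMap.range Φ.mulVecLin) = m := hΦ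
    have hker0 : Module.finrank ℝ (LinearMap.ker Φ.mulVecLin) = 0 := by omega
    have hker : LinearMap.ker Φ.mulVecLin = ⊥ :=
      Submodule.finrank_eq_zero.mp hker0
    have : v ∈ LinearMap.ker Φ.mulVecLin := by
      simpa [Matrix.mulVecLin_apply] using hv
    rw [hker] at this
    simpa using this
  -- quadratic form lemma: (Φᵀ D B).mulVec v = 0 with appropriate kernel arg
  have hquad : ∀ v : Fin m → ℝ, (Φᵀ * D * Φ).mulVec v = 0 → v = 0 := by
    intro v hv
    set u := Φ.mulVec v with hu
    have hdot : v ⬝ᵥ (Φᵀ * D * Φ).mulVec v = ∑ i, D i i * (u i)^2 := by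
      rw [← Matrix.mulVec_mulVec, ← Matrix.mulVec_mulVec,
        Matrix.dotProduct_mulVec, Matrix.vecMul_transpose]
      have hDu : D.mulVec u = fun i => D i i * u i := by
        funext i
        rw [Matrix.mulVec]
        simp only [dotProduct]
        rw [Finset.sum_eq_single i]
        · intro b _ hb; rw [hDdiag i b (Ne.symm hb), zero_mul]
        · intro h; exact absurd (Finset.mem_univ i) h
      rw [hDu]
      simp [dotProduct, pow_two, mul_comm, mul_assoc, mul_left_comm]
      rfl
    rw [hv] at hdot
    simp only [dotProduct_zero] at hdot
    have hu0 : u = 0 := by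
      funext i
      have hterm : ∀ j ∈ Finset.univ, 0 ≤ D j j * (u j)^2 := fun j _ =>
        mul_nonneg (hDpos j).le (sq_nonneg _)
      have := (Finset.sum_eq_zero_iff_of_nonneg hterm).mp hdot.symm i (Finset.mem_univ i)
      have h2 : (u i)^2 = 0 := by
        rcases mul_eq_zero.mp this with h | h
        · exact absurd h (hDpos i).ne'
        · exact h
      simpa using pow_eq_zero_iff (n := 2) (by norm_num) |>.mp h2
    exact hΦinj v hu0
  set A := Φᵀ * D * Φ with hA
  have hAunit : IsUnit A := aux_isUnit A hquad
  have hAinv : A⁻¹ * A = 1 := Matrix.nonsing_inv_mul A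
    ((Matrix.isUnit_iff_isUnit_det A).mp hAunit)
  obtain ⟨ν, K, hK0, hK1, hν0, hνadd, hνsmul, hνcon⟩ := hcontraction
  apply aux_isUnit
  intro x hx
  -- rewrite hx
  have hexp : (Φᵀ * D * (1 - (γ ^ n) • P ^ n) * Φ) =
      A - (γ ^ n) • (Φᵀ * D * (P ^ n) * Φ) := by
    rw [hA]
    rw [Matrix.mul_sub, Matrix.sub_mul, Matrix.mul_one]
    simp [Matrix.mul_smul, Matrix.smul_mul, Matrix.mul_assoc]
  rw [hexp, Matrix.sub_mulVec, Matrix.smul_mulVec, sub_eq_zero] at hx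
  -- F x - F 0 = x
  have hxeq : x = (γ ^ n) • (A⁻¹ * (Φᵀ * D * (P ^ n) * Φ)).mulVec x := by
    have h1 : A⁻¹.mulVec (A.mulVec x) = x := by
      rw [Matrix.mulVec_mulVec, hAinv, Matrix.one_mulVec]
    calc x = A⁻¹ *ᵥ (A *ᵥ x) := h1.symm
      _ = (γ ^ n) • (A⁻¹ * (Φᵀ * D * (P ^ n) * Φ)).mulVec x := by
          rw [hx, Matrix.mulVec_smul, Matrix.mulVec_mulVec]
  have hFx : F x - F 0 = x := by
    rw [hF x, hF 0]
    rw [← Matrix.mulVec_sub]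
    have hc : (c + (γ ^ n) • ((P ^ n * Φ).mulVec x)) - (c + (γ ^ n) • ((P ^ n * Φ).mulVec 0))
        = (γ ^ n) • ((P ^ n * Φ).mulVec x) := by
      rw [Matrix.mulVec_zero]
      simp
    rw [hc, Matrix.mulVec_smul, Matrix.mulVec_mulVec]
    have hmat : (A⁻¹ * Φᵀ * D) * (P ^ n * Φ) = A⁻¹ * (Φᵀ * D * (P ^ n) * Φ) := by
      simp [Matrix.mul_assoc]
    rw [hmat]
    exact hxeq.symm
  -- contraction implies x = 0
  have hle : ν x ≤ K * ν x := by
    have := hνcon x 0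
    rwa [hFx, sub_zero] at this
  have hν0' : ν 0 = 0 := (hν0 0).mpr rfl
  have hnonneg : 0 ≤ ν x := by
    have h1 : ν (x + (-x)) ≤ ν x + ν (-x) := hνadd x (-x)
    have h2 : ν (-x) = ν x := by
      have := hνsmul (-1) x
      simpa using this
    rw [add_neg_cancel, hν0', h2] at h1
    linarith
  have hx0 : ν x = 0 := by nlinarith
  exact (hν0 x).mp hx0
end

section
/- Let V = Σ_{k=0}^∞ γ^k P^k R (the true value function) and suppose γ^n ‖Π‖_∞ < 1. If Φθ*ⁿ = Π T^n(Φθ*ⁿ), then ‖Φθ*ⁿ − V‖_∞ ≤ (1 − γ^n ‖Π‖_∞)^{-1} ‖ΠV − V‖_∞. -/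
open Matrix BigOperators

/-- sup-norm of a vector -/
noncomputable def supNorm {S : ℕ} (x : Fin S → ℝ) : ℝ := ⨆ i, |x i|

/-- induced ∞-norm of a matrix: maximum absolute row sum -/
noncomputable def matInftyNorm {S : ℕ} (A : Matrix (Fin S) (Fin S) ℝ) : ℝ :=
  ⨆ i, ∑ j, |A i j|

section Aux

variable {S : ℕ} [NeZero S]

lemma abs_le_supNorm (x : Fin S → ℝ) (i : Fin S) : |x i| ≤ supNorm x :=
  le_ciSup (f := fun i => |x i|) (Set.Finite.bddAbove (Set.finite_range _)) i

lemma supNorm_le {x : Fin S → ℝ} {c : ℝ} (h : ∀ i, |x i| ≤ c) : supNorm x ≤ c := by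
  haveI : Nonempty (Fin S) := ⟨⟨0, Nat.pos_of_ne_zero (NeZero.ne S)⟩⟩
  exact ciSup_le h

lemma supNorm_nonneg (x : Fin S → ℝ) : 0 ≤ supNorm x := by
  haveI : Nonempty (Fin S) := ⟨⟨0, Nat.pos_of_ne_zero (NeZero.ne S)⟩⟩
  exact le_trans (abs_nonneg _) (abs_le_supNorm x (Classical.arbitrary _))

lemma rowsum_le_matInftyNorm (A : Matrix (Fin S) (Fin S) ℝ) (i : Fin S) :
    ∑ j, |A i j| ≤ matInftyNorm A :=
  le_ciSup (f := fun i => ∑ j, |A i j|) (Set.Finite.bddAbove (Set.finite_range _)) i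

lemma matInftyNorm_nonneg (A : Matrix (Fin S) (Fin S) ℝ) : 0 ≤ matInftyNorm A := by
  haveI : Nonempty (Fin S) := ⟨⟨0, Nat.pos_of_ne_zero (NeZero.ne S)⟩⟩
  refine le_trans ?_ (rowsum_le_matInftyNorm A (Classical.arbitrary _))
  exact Finset.sum_nonneg fun j _ => abs_nonneg _

lemma supNorm_mulVec_le (A : Matrix (Fin S) (Fin S) ℝ) (x : Fin S → ℝ) :
    supNorm (A.mulVec x) ≤ matInftyNorm A * supNorm x := by
  refine supNorm_le fun i => ?_
  calc |A.mulVec x i| = |∑ j, A i j * x j| := rfl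
    _ ≤ ∑ j, |A i j * x j| := Finset.abs_sum_le_sum_abs _ _
    _ = ∑ j, |A i j| * |x j| := by simp [abs_mul]
    _ ≤ ∑ j, |A i j| * supNorm x := by
        refine Finset.sum_le_sum fun j _ => ?_
        exact mul_le_mul_of_nonneg_left (abs_le_supNorm x j) (abs_nonneg _)
    _ = (∑ j, |A i j|) * supNorm x := by rw [Finset.sum_mul]
    _ ≤ matInftyNorm A * supNorm x :=
        mul_le_mul_of_nonneg_right (rowsum_le_matInftyNorm A i) (supNorm_nonneg x)

lemma supNorm_add_le (x y : Fin S → ℝ) : supNorm (x + y) ≤ supNorm x + supNorm y := by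
  refine supNorm_le fun i => ?_
  calc |(x + y) i| = |x i + y i| := rfl
    _ ≤ |x i| + |y i| := abs_add_le _ _
    _ ≤ supNorm x + supNorm y := add_le_add (abs_le_supNorm x i) (abs_le_supNorm y i)

lemma supNorm_smul_le (c : ℝ) (x : Fin S → ℝ) : supNorm (c • x) ≤ |c| * supNorm x := by
  refine supNorm_le fun i => ?_
  calc |(c • x) i| = |c| * |x i| := by simp [abs_mul]
    _ ≤ |c| * supNorm x := mul_le_mul_of_nonneg_left (abs_le_supNorm x i) (abs_nonneg _)

lemma pow_entry_nonneg {P : Matrix (Fin S) (Fin S) ℝ}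
    (hPnonneg : ∀ i j, 0 ≤ P i j) (k : ℕ) : ∀ i j, 0 ≤ (P ^ k) i j := by
  induction k with
  | zero => intro i j; by_cases h : i = j <;> simp [Matrix.one_apply, h]
  | succ k ih =>
      intro i j
      rw [pow_succ, Matrix.mul_apply]
      exact Finset.sum_nonneg fun l _ => mul_nonneg (ih i l) (hPnonneg l j)

lemma pow_rowsum {P : Matrix (Fin S) (Fin S) ℝ}
    (hProw : ∀ i, ∑ j, P i j = 1) (k : ℕ) : ∀ i, ∑ j, (P ^ k) i j = 1 := by
  induction k with
  | zero => intro i; simp [Matrix.one_apply]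
  | succ k ih =>
      intro i
      simp only [pow_succ, Matrix.mul_apply]
      rw [Finset.sum_comm]
      calc ∑ l, ∑ j, (P ^ k) i l * P l j = ∑ l, (P ^ k) i l * ∑ j, P l j := by
            simp [Finset.mul_sum]
        _ = 1 := by simp [hProw, ih i]

lemma supNorm_stochastic_mulVec_le {P : Matrix (Fin S) (Fin S) ℝ}
    (hPnonneg : ∀ i j, 0 ≤ P i j) (hProw : ∀ i, ∑ j, P i j = 1)
    (k : ℕ) (x : Fin S → ℝ) : supNorm ((P ^ k).mulVec x) ≤ supNorm x := by
  refine supNorm_le fun i => ?_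
  calc |(P ^ k).mulVec x i| = |∑ j, (P ^ k) i j * x j| := rfl
    _ ≤ ∑ j, |(P ^ k) i j * x j| := Finset.abs_sum_le_sum_abs _ _
    _ = ∑ j, (P ^ k) i j * |x j| := by
        refine Finset.sum_congr rfl fun j _ => ?_
        rw [abs_mul, abs_of_nonneg (pow_entry_nonneg hPnonneg k i j)]
    _ ≤ ∑ j, (P ^ k) i j * supNorm x := by
        refine Finset.sum_le_sum fun j _ => ?_
        exact mul_le_mul_of_nonneg_left (abs_le_supNorm x j) (pow_entry_nonneg hPnonneg k i j)
    _ = supNorm x := by rw [← Finset.sum_mul, pow_rowsum hProw k i, one_mul]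

end Aux

theorem stmt5 {S m : ℕ} [NeZero S] [NeZero m]
    (γ : ℝ) (hγ : γ ∈ Set.Ioo (0:ℝ) 1) (n : ℕ) (hn : 1 ≤ n)
    (Φ : Matrix (Fin S) (Fin m) ℝ)
    (P : Matrix (Fin S) (Fin S) ℝ)
    (hPnonneg : ∀ i j, 0 ≤ P i j) (hProw : ∀ i, ∑ j, P i j = 1)
    (R : Fin S → ℝ)
    (Pi : Matrix (Fin S) (Fin S) ℝ)
    (Tn : (Fin S → ℝ) → (Fin S → ℝ))
    (hTn : ∀ x, Tn x = (∑ k ∈ Finset.range n, (γ ^ k) • ((P ^ k).mulVec R))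
        + (γ ^ n) • ((P ^ n).mulVec x))
    (V : Fin S → ℝ) (hV : V = ∑' k : ℕ, (γ ^ k) • ((P ^ k).mulVec R))
    (hρ : γ ^ n * matInftyNorm Pi < 1)
    (θn : Fin m → ℝ) (hfix : Φ.mulVec θn = Pi.mulVec (Tn (Φ.mulVec θn))) :
    supNorm (Φ.mulVec θn - V)
      ≤ (1 - γ ^ n * matInftyNorm Pi)⁻¹ * supNorm (Pi.mulVec V - V) := by
  have hγ0 : 0 < γ := hγ.1
  have hγ1 : γ < 1 := hγ.2
  set a : ℕ → (Fin S → ℝ) := fun k => (γ ^ k) • ((P ^ k).mulVec R) with ha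
  -- summability
  have hsum : Summable a := by
    rw [_root_.Pi.summable]
    intro i
    refine Summable.of_norm_bounded (g := fun k => γ ^ k * supNorm R)
      ((summable_geometric_of_lt_one hγ0.le hγ1).mul_right (supNorm R)) fun k => ?_
    have h1 : ‖a k i‖ = γ ^ k * |(P ^ k).mulVec R i| := by
      have : a k i = γ ^ k * (P ^ k).mulVec R i := rfl
      rw [Real.norm_eq_abs, this, abs_mul, abs_of_nonneg (pow_nonneg hγ0.le k)]
    rw [h1]
    refine mul_le_mul_of_nonneg_left ?_ (pow_nonneg hγ0.le k)
    exact le_trans (abs_le_supNorm _ i)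
      (supNorm_stochastic_mulVec_le hPnonneg hProw k R)
  -- the shifted terms
  have hshift : ∀ k, a (k + n) = (γ ^ n) • ((P ^ n).mulVec (a k)) := by
    intro k
    simp only [ha]
    rw [Matrix.mulVec_smul, Matrix.mulVec_mulVec, smul_smul, ← pow_add, ← pow_add,
      Nat.add_comm k n]
  -- V is a fixed point of Tn
  have hTnV : Tn V = V := by
    -- continuous linear map x ↦ γ^n • (P^n).mulVec x
    let L0 : (Fin S → ℝ) →ₗ[ℝ] (Fin S → ℝ) := (γ ^ n) • (P ^ n).mulVecLin
    let L : (Fin S → ℝ) →L[ℝ] (Fin S → ℝ) := LinearMap.toContinuousLinearMap L0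
    have hL : ∀ x, L x = (γ ^ n) • ((P ^ n).mulVec x) := fun x => rfl
    have h1 : ∑' k : ℕ, a (k + n) = (γ ^ n) • ((P ^ n).mulVec V) := by
      calc ∑' k : ℕ, a (k + n) = ∑' k : ℕ, L (a k) := by
            refine tsum_congr fun k => ?_
            rw [hshift k, hL]
        _ = L (∑' k, a k) := (L.map_tsum hsum).symm
        _ = (γ ^ n) • ((P ^ n).mulVec V) := by rw [hL, hV]
    rw [hTn V, ← h1, hV]
    exact (Summable.sum_add_tsum_nat_add n hsum)
  -- error decomposition
  have hT : Tn (Φ.mulVec θn)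
      = V + (γ ^ n) • ((P ^ n).mulVec (Φ.mulVec θn - V)) := by
    rw [hTn (Φ.mulVec θn)]
    conv_lhs => rw [show Φ.mulVec θn = V + (Φ.mulVec θn - V) by abel]
    rw [Matrix.mulVec_add, smul_add, ← add_assoc, ← hTn V, hTnV]
  have hdecomp : Φ.mulVec θn - V = (Pi.mulVec V - V)
      + (γ ^ n) • (Pi.mulVec ((P ^ n).mulVec (Φ.mulVec θn - V))) := by
    conv_lhs => rw [hfix, hT]
    rw [Matrix.mulVec_add, Matrix.mulVec_smul]
    abel
  -- norm inequality
  set ρ : ℝ := γ ^ n * matInftyNorm Pi with hρdef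
  set D : ℝ := supNorm (Pi.mulVec V - V) with hD
  have hkey : supNorm (Φ.mulVec θn - V) ≤ D + ρ * supNorm (Φ.mulVec θn - V) := by
    set e : Fin S → ℝ := Φ.mulVec θn - V with he
    calc supNorm e
        = supNorm ((Pi.mulVec V - V) + (γ ^ n) • (Pi.mulVec ((P ^ n).mulVec e))) := by
          rw [← hdecomp]
      _ ≤ D + supNorm ((γ ^ n) • (Pi.mulVec ((P ^ n).mulVec e))) := by
          rw [hD]; exact supNorm_add_le _ _
      _ ≤ D + γ ^ n * supNorm (Pi.mulVec ((P ^ n).mulVec e)) := by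
          have := supNorm_smul_le (γ ^ n) (Pi.mulVec ((P ^ n).mulVec e))
          rw [abs_of_nonneg (pow_nonneg hγ0.le n)] at this
          linarith
      _ ≤ D + γ ^ n * (matInftyNorm Pi * supNorm ((P ^ n).mulVec e)) := by
          have := supNorm_mulVec_le Pi ((P ^ n).mulVec e)
          nlinarith [pow_nonneg hγ0.le n]
      _ ≤ D + ρ * supNorm e := by
          have h1 := supNorm_stochastic_mulVec_le hPnonneg hProw n e
          have h2 : (0:ℝ) ≤ γ ^ n * matInftyNorm Pi :=
            mul_nonneg (pow_nonneg hγ0.le n) (matInftyNorm_nonneg Pi)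
          rw [hρdef]
          nlinarith [pow_nonneg hγ0.le n, matInftyNorm_nonneg Pi]
  have h1ρ : 0 < 1 - ρ := by linarith
  rw [inv_mul_eq_div, le_div_iff₀ h1ρ]
  nlinarith [hkey]
end

section
/- Suppose M = Φ^T D (γ^n P^n − I) Φ is nonsingular. Then θ̄ is a stationary point of f(θ) = (1/2)‖Π T^n(Φθ) − Φθ‖²_D (i.e., ∇f(θ̄) = 0) if and only if Φθ̄ = Π T^n(Φθ̄). -/
open Matrix BigOperators

lemma phi_inj {S m : ℕ} (Φ : Matrix (Fin S) (Fin m) ℝ) (hΦ : Φ.rank = m) :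
    ∀ u : Fin m → ℝ, Φ.mulVec u = 0 → u = 0 := by
  have h1 : Module.finrank ℝ (LinearMap.range Φ.mulVecLin) +
      Module.finrank ℝ (LinearMap.ker Φ.mulVecLin) = m := by
    rw [LinearMap.finrank_range_add_finrank_ker]; simp
  have hker : LinearMap.ker Φ.mulVecLin = ⊥ := by
    have : Module.finrank ℝ (LinearMap.ker Φ.mulVecLin) = 0 := by
      have : Φ.rank = Module.finrank ℝ (LinearMap.range Φ.mulVecLin) := rfl
      omega
    exact Submodule.finrank_eq_zero.mp this
  intro u hu
  have : u ∈ LinearMap.ker Φ.mulVecLin := by simpa [Matrix.mulVecLin_apply] using hu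
  simpa [hker] using this

lemma A_unit {S m : ℕ} (Φ : Matrix (Fin S) (Fin m) ℝ) (hΦ : Φ.rank = m)
    (D : Matrix (Fin S) (Fin S) ℝ)
    (hDdiag : ∀ i j, i ≠ j → D i j = 0) (hDpos : ∀ i, 0 < D i i) :
    IsUnit (Φᵀ * D * Φ) := by
  rw [← Matrix.mulVec_injective_iff_isUnit]
  intro u v huv
  have h0 : (Φᵀ * D * Φ).mulVec (u - v) = 0 := by
    rw [Matrix.mulVec_sub, huv, sub_self]
  set w := u - v with hw
  have key : w ⬝ᵥ (Φᵀ * D * Φ).mulVec w = 0 := by rw [h0, dotProduct_zero]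
  set y := Φ.mulVec w with hy
  have hDy : D.mulVec y = fun i => D i i * y i := by
    funext i
    rw [Matrix.mulVec]
    simp only [dotProduct]
    rw [Finset.sum_eq_single i]
    · intro j _ hj; rw [hDdiag i j (Ne.symm hj), zero_mul]
    · intro h; exact absurd (Finset.mem_univ i) h
  have key2 : ∑ i, D i i * y i ^ 2 = 0 := by
    have heq : w ⬝ᵥ (Φᵀ * D * Φ).mulVec w = y ⬝ᵥ D.mulVec y := by
      rw [← Matrix.mulVec_mulVec, ← Matrix.mulVec_mulVec,
        Matrix.dotProduct_mulVec, Matrix.vecMul_transpose]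
    rw [heq, hDy] at key
    rw [← key]
    exact Finset.sum_congr rfl fun i _ => by simp [dotProduct]; ring
  have hy0 : y = 0 := by
    funext i
    have hall : ∀ i ∈ Finset.univ, (0:ℝ) ≤ D i i * y i ^ 2 := fun i _ =>
      mul_nonneg (hDpos i).le (sq_nonneg _)
    have hi := (Finset.sum_eq_zero_iff_of_nonneg hall).mp key2 i (Finset.mem_univ i)
    have h2 : y i ^ 2 = 0 := (mul_eq_zero.mp hi).resolve_left (hDpos i).ne'
    simpa using pow_eq_zero_iff (two_ne_zero) |>.mp h2
  have := phi_inj Φ hΦ w hy0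
  exact sub_eq_zero.mp this

theorem stmt9 {S m : ℕ} [NeZero S] [NeZero m]
    (γ : ℝ) (hγ : γ ∈ Set.Ioo (0:ℝ) 1) (n : ℕ) (hn : 1 ≤ n)
    (Φ : Matrix (Fin S) (Fin m) ℝ) (hΦ : Φ.rank = m)
    (D : Matrix (Fin S) (Fin S) ℝ)
    (hDdiag : ∀ i j, i ≠ j → D i j = 0) (hDpos : ∀ i, 0 < D i i)
    (P : Matrix (Fin S) (Fin S) ℝ)
    (hPnonneg : ∀ i j, 0 ≤ P i j) (hProw : ∀ i, ∑ j, P i j = 1)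
    (c : Fin S → ℝ)
    (M : Matrix (Fin m) (Fin m) ℝ)
    (hM : M = Φᵀ * D * ((γ ^ n) • P ^ n - 1) * Φ)
    (hMunit : IsUnit M)
    (Pi : Matrix (Fin S) (Fin S) ℝ) (hPi : Pi = Φ * (Φᵀ * D * Φ)⁻¹ * Φᵀ * D)
    (Tn : (Fin S → ℝ) → (Fin S → ℝ))
    (hTn : ∀ x, Tn x = c + (γ ^ n) • ((P ^ n).mulVec x)) :
    ∀ θ : Fin m → ℝ,
      (Mᵀ * (Φᵀ * D * Φ)⁻¹ * Φᵀ * D).mulVec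
          (Pi.mulVec (Tn (Φ.mulVec θ)) - Φ.mulVec θ) = 0
        ↔ Φ.mulVec θ = Pi.mulVec (Tn (Φ.mulVec θ)) := by
  intro θ
  set A := Φᵀ * D * Φ with hA
  have hAunit : IsUnit A := A_unit Φ hΦ D hDdiag hDpos
  have hAdet : IsUnit A.det := (Matrix.isUnit_iff_isUnit_det A).mp hAunit
  set t := Tn (Φ.mulVec θ) with ht
  set u : Fin m → ℝ := (A⁻¹ * Φᵀ * D).mulVec t - θ with hu
  have hv : Pi.mulVec t - Φ.mulVec θ = Φ.mulVec u := by
    rw [hu, Matrix.mulVec_sub]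
    congr 1
    have hP2 : Pi = Φ * (A⁻¹ * Φᵀ * D) := by
      rw [hPi]; simp only [Matrix.mul_assoc]
    rw [hP2, ← Matrix.mulVec_mulVec]
  have hMT : IsUnit Mᵀ := by
    rw [Matrix.isUnit_iff_isUnit_det, Matrix.det_transpose]
    exact (Matrix.isUnit_iff_isUnit_det M).mp hMunit
  have hMTinj : Function.Injective Mᵀ.mulVec :=
    Matrix.mulVec_injective_iff_isUnit.mpr hMT
  have hLHS : (Mᵀ * A⁻¹ * Φᵀ * D).mulVec (Pi.mulVec t - Φ.mulVec θ)
      = Mᵀ.mulVec u := by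
    rw [hv, Matrix.mulVec_mulVec]
    congr 1
    have : Mᵀ * A⁻¹ * Φᵀ * D * Φ = Mᵀ * (A⁻¹ * A) := by
      rw [hA]; simp only [Matrix.mul_assoc]
    rw [this, Matrix.nonsing_inv_mul A hAdet, Matrix.mul_one]
  rw [hLHS]
  constructor
  · intro h
    have hu0 : u = 0 := hMTinj (by rw [h, Matrix.mulVec_zero])
    have : Pi.mulVec t - Φ.mulVec θ = 0 := by rw [hv, hu0, Matrix.mulVec_zero]
    exact (sub_eq_zero.mp this).symm
  · intro h
    have : Φ.mulVec u = 0 := by rw [← hv, ← h, sub_self]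
    rw [phi_inj Φ hΦ u this, Matrix.mulVec_zero]
end

section
/- Suppose M = Φ^T D (γ^n P^n − I) Φ is nonsingular. Then θ̄ satisfies M^T D' Φ^T D (T^n(Φθ̄) − Φθ̄) = 0 for a positive definite matrix D' if and only if Φθ̄ = Π T^n(Φθ̄); i.e., the unique stationary point of g(θ) = (1/2)‖Φ^T D (T^n(Φθ) − Φθ)‖²_{D'} coincides with the unique fixed point of the projected Bellman equation. -/
open Matrix BigOperators

theorem stmt10 {S m : ℕ} [NeZero S] [NeZero m]
    (γ : ℝ) (hγ : γ ∈ Set.Ioo (0:ℝ) 1) (n : ℕ) (hn : 1 ≤ n)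
    (Φ : Matrix (Fin S) (Fin m) ℝ) (hΦ : Φ.rank = m)
    (D : Matrix (Fin S) (Fin S) ℝ)
    (hDdiag : ∀ i j, i ≠ j → D i j = 0) (hDpos : ∀ i, 0 < D i i)
    (D' : Matrix (Fin m) (Fin m) ℝ) (hD' : D'.PosDef)
    (P : Matrix (Fin S) (Fin S) ℝ)
    (hPnonneg : ∀ i j, 0 ≤ P i j) (hProw : ∀ i, ∑ j, P i j = 1)
    (c : Fin S → ℝ)
    (M : Matrix (Fin m) (Fin m) ℝ)
    (hM : M = Φᵀ * D * ((γ ^ n) • P ^ n - 1) * Φ)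
    (hMunit : IsUnit M)
    (Pi : Matrix (Fin S) (Fin S) ℝ) (hPi : Pi = Φ * (Φᵀ * D * Φ)⁻¹ * Φᵀ * D)
    (Tn : (Fin S → ℝ) → (Fin S → ℝ))
    (hTn : ∀ x, Tn x = c + (γ ^ n) • ((P ^ n).mulVec x)) :
    ∀ θ : Fin m → ℝ,
      (Mᵀ * D').mulVec ((Φᵀ * D).mulVec (Tn (Φ.mulVec θ) - Φ.mulVec θ)) = 0
        ↔ Φ.mulVec θ = Pi.mulVec (Tn (Φ.mulVec θ)) := by
  -- Φ has injective mulVec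
  have hinj : Function.Injective Φ.mulVec := by
    rw [show Φ.mulVec = Φ.mulVecLin from rfl, ← LinearMap.ker_eq_bot]
    have h1 := LinearMap.finrank_range_add_finrank_ker Φ.mulVecLin
    have h2 : Module.finrank ℝ (LinearMap.range Φ.mulVecLin) = m := hΦ
    rw [Module.finrank_pi, Fintype.card_fin, h2] at h1
    have : Module.finrank ℝ (LinearMap.ker Φ.mulVecLin) = 0 := by omega
    exact Submodule.finrank_eq_zero.mp this
  -- Φᵀ D Φ is a unit
  have key : ∀ x : Fin m → ℝ, (Φᵀ * D * Φ).mulVec x = 0 → x = 0 := by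
    intro x hx
    set y := Φ.mulVec x with hy
    have hquad : x ⬝ᵥ ((Φᵀ * D * Φ).mulVec x) = ∑ i, D i i * (y i)^2 := by
      rw [← Matrix.mulVec_mulVec, ← Matrix.mulVec_mulVec, Matrix.dotProduct_mulVec,
        Matrix.vecMul_transpose]
      simp only [dotProduct, Matrix.mulVec, dotProduct]
      rw [Finset.sum_congr rfl (fun i _ => ?_)]
      rw [Finset.sum_eq_single i (fun j _ hji => by rw [hDdiag i j (Ne.symm hji), zero_mul])
        (fun h => absurd (Finset.mem_univ i) h)]
      simp only [hy, Matrix.mulVec, dotProduct]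
      ring
    rw [hx, dotProduct_zero] at hquad
    have hy0 : y = 0 := by
      funext i
      have hnn : ∀ i ∈ Finset.univ, 0 ≤ D i i * (y i)^2 :=
        fun i _ => mul_nonneg (hDpos i).le (sq_nonneg _)
      have := (Finset.sum_eq_zero_iff_of_nonneg hnn).mp hquad.symm i (Finset.mem_univ i)
      have := (mul_eq_zero.mp this).resolve_left (hDpos i).ne'
      simpa using pow_eq_zero_iff (n := 2) (by norm_num) |>.mp this
    exact hinj (by rw [← hy, hy0]; simp)
  have hFDunit : IsUnit (Φᵀ * D * Φ) := by
    rw [← Matrix.mulVec_injective_iff_isUnit]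
    intro a b hab
    have : (Φᵀ * D * Φ).mulVec (a - b) = 0 := by
      rw [Matrix.mulVec_sub, hab, sub_self]
    exact sub_eq_zero.mp (key _ this)
  have hFDdet : IsUnit (Φᵀ * D * Φ).det := (Matrix.isUnit_iff_isUnit_det _).mp hFDunit
  -- Φᵀ D Pi = Φᵀ D
  have hproj : Φᵀ * D * Pi = Φᵀ * D := by
    rw [hPi]
    calc Φᵀ * D * (Φ * (Φᵀ * D * Φ)⁻¹ * Φᵀ * D)
        = (Φᵀ * D * Φ) * (Φᵀ * D * Φ)⁻¹ * (Φᵀ * D) := by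
          simp only [Matrix.mul_assoc]
      _ = Φᵀ * D := by rw [Matrix.mul_nonsing_inv _ hFDdet, Matrix.one_mul]
  have hMD'unit : IsUnit (Mᵀ * D') := by
    refine ((Matrix.isUnit_iff_isUnit_det _).mpr ?_)
    rw [Matrix.det_mul, Matrix.det_transpose]
    exact ((Matrix.isUnit_iff_isUnit_det _).mp hMunit).mul hD'.det_pos.ne'.isUnit
  intro θ
  set u := Tn (Φ.mulVec θ) with hu
  constructor
  · intro h
    have h0 : (Φᵀ * D).mulVec (u - Φ.mulVec θ) = 0 := by
      have hi := Matrix.mulVec_injective_iff_isUnit.mpr hMD'unit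
      apply hi
      rw [h, Matrix.mulVec_zero]
    have h1 : (Φᵀ * D).mulVec u = (Φᵀ * D * Φ).mulVec θ := by
      have := Matrix.mulVec_sub (Φᵀ * D) u (Φ.mulVec θ)
      rw [h0] at this
      have h2 := sub_eq_zero.mp this.symm
      rw [h2, Matrix.mulVec_mulVec]
    rw [hPi]
    calc Φ.mulVec θ
        = (Φ * ((Φᵀ * D * Φ)⁻¹ * (Φᵀ * D * Φ))).mulVec θ := by
          rw [Matrix.nonsing_inv_mul _ hFDdet, Matrix.mul_one]
      _ = (Φ * (Φᵀ * D * Φ)⁻¹ * Φᵀ * D).mulVec u := by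
          rw [← Matrix.mulVec_mulVec, ← Matrix.mulVec_mulVec, ← h1]
          simp only [Matrix.mul_assoc, Matrix.mulVec_mulVec]
  · intro h
    have : (Φᵀ * D).mulVec (u - Φ.mulVec θ) = 0 := by
      rw [Matrix.mulVec_sub, h, Matrix.mulVec_mulVec, hproj, sub_self]
    rw [this, Matrix.mulVec_zero]
end

section
/- Let Φ ∈ ℝ^{S×m} have full column rank, D be diagonal positive definite, P row-stochastic, and γ ∈ (0,1). Define B_n = Φ^T D (γ^n P^n − I) Φ. Then B_n + B_n^T → −2 Φ^T D Φ ≺ 0 as n → ∞, and consequently there exists n̄* such that for all n ≥ n̄*, B_n + B_n^T ≺ 0 (so every eigenvalue of B_n has strictly negative real part, i.e., B_n is Hurwitz). -/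
open Matrix BigOperators Filter

private lemma quad_abs_bound {m : ℕ} (M : Matrix (Fin m) (Fin m) ℝ) (x : Fin m → ℝ) :
    |x ⬝ᵥ M *ᵥ x| ≤ (∑ i, ∑ j, |M i j|) * ‖x‖^2 := by
  rw [Finset.sum_mul]
  simp only [dotProduct, mulVec, dotProduct, Finset.mul_sum]
  refine (Finset.abs_sum_le_sum_abs _ _).trans (Finset.sum_le_sum fun i _ => ?_)
  rw [Finset.sum_mul]
  refine (Finset.abs_sum_le_sum_abs _ _).trans (Finset.sum_le_sum fun j _ => ?_)
  rw [abs_mul, abs_mul]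
  calc |x i| * (|M i j| * |x j|) = |M i j| * (|x i| * |x j|) := by ring
    _ ≤ |M i j| * (‖x‖ * ‖x‖) := by
        apply mul_le_mul_of_nonneg_left _ (abs_nonneg _)
        exact mul_le_mul (norm_le_pi_norm x i) (norm_le_pi_norm x j) (abs_nonneg _) (norm_nonneg _)
    _ = |M i j| * ‖x‖^2 := by ring

private lemma coercive_of_pos {m : ℕ} [NeZero m] (L : Matrix (Fin m) (Fin m) ℝ)
    (hL : ∀ x : Fin m → ℝ, x ≠ 0 → 0 < x ⬝ᵥ L *ᵥ x) :
    ∃ c > 0, ∀ x : Fin m → ℝ, c * ‖x‖^2 ≤ x ⬝ᵥ L *ᵥ x := by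
  have hcpt : IsCompact (Metric.sphere (0 : Fin m → ℝ) 1) := isCompact_sphere _ _
  have hne : (Metric.sphere (0 : Fin m → ℝ) 1).Nonempty := by
    refine ⟨fun _ => 1, ?_⟩
    simp [pi_norm_const]
  have hcontQ : Continuous fun x : Fin m → ℝ => x ⬝ᵥ L *ᵥ x := by
    unfold dotProduct mulVec dotProduct
    fun_prop
  obtain ⟨x₀, hx₀s, hx₀min⟩ := hcpt.exists_isMinOn hne hcontQ.continuousOn
  have hx₀n : ‖x₀‖ = 1 := by simpa using hx₀s
  have hx₀ne : x₀ ≠ 0 := by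
    intro h; rw [h] at hx₀n; simp at hx₀n
  have hscale : ∀ (a : ℝ) (x : Fin m → ℝ), (a • x) ⬝ᵥ L *ᵥ (a • x) = a^2 * (x ⬝ᵥ L *ᵥ x) := by
    intro a x
    rw [Matrix.mulVec_smul, dotProduct_smul, smul_dotProduct]
    simp [smul_eq_mul]; ring
  refine ⟨_, hL x₀ hx₀ne, fun x => ?_⟩
  by_cases hx : x = 0
  · simp [hx]
  · have hnx : (0:ℝ) < ‖x‖ := norm_pos_iff.mpr hx
    have hmem : (‖x‖⁻¹ • x) ∈ Metric.sphere (0 : Fin m → ℝ) 1 := by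
      simp [norm_smul, abs_of_pos (inv_pos.mpr hnx), inv_mul_cancel₀ hnx.ne']
    have hmin := hx₀min hmem
    have heq := hscale ‖x‖⁻¹ x
    simp only [Set.mem_setOf_eq] at hmin
    have h1 : x₀ ⬝ᵥ L *ᵥ x₀ ≤ ‖x‖⁻¹^2 * (x ⬝ᵥ L *ᵥ x) := by
      calc x₀ ⬝ᵥ L *ᵥ x₀ ≤ (‖x‖⁻¹ • x) ⬝ᵥ L *ᵥ (‖x‖⁻¹ • x) := hmin
        _ = ‖x‖⁻¹^2 * (x ⬝ᵥ L *ᵥ x) := heq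
    have h2 : ‖x‖^2 * (x₀ ⬝ᵥ L *ᵥ x₀) ≤ ‖x‖^2 * (‖x‖⁻¹^2 * (x ⬝ᵥ L *ᵥ x)) :=
      mul_le_mul_of_nonneg_left h1 (by positivity)
    calc (x₀ ⬝ᵥ L *ᵥ x₀) * ‖x‖^2 = ‖x‖^2 * (x₀ ⬝ᵥ L *ᵥ x₀) := by ring
      _ ≤ ‖x‖^2 * (‖x‖⁻¹^2 * (x ⬝ᵥ L *ᵥ x)) := h2
      _ = x ⬝ᵥ L *ᵥ x := by field_simp

private lemma re_lt_zero_of_spectrum {m : ℕ} (M : Matrix (Fin m) (Fin m) ℝ)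
    (hM : (-(M + Mᵀ)).PosDef)
    (μ : ℂ) (hμ : μ ∈ spectrum ℂ (M.map Complex.ofReal)) : μ.re < 0 := by
  set Mc := M.map Complex.ofReal with hMc
  have hdet : ((algebraMap ℂ (Matrix (Fin m) (Fin m) ℂ)) μ - Mc).det = 0 := by
    have h1 := spectrum.mem_iff.mp hμ
    rw [Matrix.isUnit_iff_isUnit_det, isUnit_iff_ne_zero, not_not] at h1
    exact h1
  obtain ⟨v, hv0, hv⟩ := (Matrix.exists_mulVec_eq_zero_iff).mpr hdet
  have heig : Mc *ᵥ v = μ • v := by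
    have h2 : (algebraMap ℂ (Matrix (Fin m) (Fin m) ℂ)) μ = μ • (1 : Matrix (Fin m) (Fin m) ℂ) := by
      rw [Algebra.algebraMap_eq_smul_one]
    rw [h2, Matrix.sub_mulVec, Matrix.smul_mulVec, Matrix.one_mulVec, sub_eq_zero] at hv
    exact hv.symm
  set a : Fin m → ℝ := fun i => (v i).re with ha
  set b : Fin m → ℝ := fun i => (v i).im with hb
  have key : (star v ⬝ᵥ Mc *ᵥ v).re = a ⬝ᵥ M *ᵥ a + b ⬝ᵥ M *ᵥ b := by
    simp only [hMc, dotProduct, mulVec, dotProduct, Matrix.map_apply, Pi.star_apply]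
    rw [Complex.re_sum, ← Finset.sum_add_distrib]
    refine Finset.sum_congr rfl fun i _ => ?_
    rw [Finset.mul_sum, Complex.re_sum, Finset.mul_sum, Finset.mul_sum, ← Finset.sum_add_distrib]
    refine Finset.sum_congr rfl fun j _ => ?_
    simp only [RCLike.star_def, Complex.mul_re, Complex.conj_re, Complex.conj_im,
      Complex.ofReal_re, Complex.ofReal_im, Complex.mul_im, ha, hb]
    ring
  have ht : (star v ⬝ᵥ v) = ((∑ i, Complex.normSq (v i) : ℝ) : ℂ) := by
    simp only [dotProduct, Pi.star_apply, RCLike.star_def, Complex.ofReal_sum]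
    refine Finset.sum_congr rfl fun i _ => ?_
    rw [Complex.normSq_eq_conj_mul_self]
  have htpos : (0:ℝ) < ∑ i, Complex.normSq (v i) := by
    obtain ⟨i, hi0⟩ := Function.ne_iff.mp hv0
    have hvi : v i ≠ 0 := by simpa using hi0
    exact Finset.sum_pos' (fun j _ => Complex.normSq_nonneg _)
      ⟨i, Finset.mem_univ i, Complex.normSq_pos.mpr hvi⟩
  have hre : (star v ⬝ᵥ Mc *ᵥ v).re = μ.re * ∑ i, Complex.normSq (v i) := by
    rw [heig, dotProduct_smul, smul_eq_mul, ht, Complex.mul_re]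
    simp
  have habs : a ≠ 0 ∨ b ≠ 0 := by
    by_contra h
    push_neg at h
    apply hv0
    funext i
    have h1 : (v i).re = 0 := congrFun h.1 i
    have h2 : (v i).im = 0 := congrFun h.2 i
    exact Complex.ext h1 h2
  have hsym : ∀ x : Fin m → ℝ, x ⬝ᵥ Mᵀ *ᵥ x = x ⬝ᵥ M *ᵥ x := by
    intro x
    rw [Matrix.dotProduct_mulVec, Matrix.vecMul_transpose]
    exact dotProduct_comm _ _
  have hquad : ∀ x : Fin m → ℝ, x ≠ 0 → x ⬝ᵥ M *ᵥ x < 0 := by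
    intro x hx
    have h3 := hM.dotProduct_mulVec_pos hx
    simp only [star_trivial, Matrix.neg_mulVec, dotProduct_neg, Matrix.add_mulVec,
      dotProduct_add, hsym] at h3
    linarith
  have hquad0 : ∀ x : Fin m → ℝ, x ⬝ᵥ M *ᵥ x ≤ 0 := by
    intro x
    have h3 := (posSemidef_iff_dotProduct_mulVec.mp hM.posSemidef).2 x
    simp only [star_trivial, Matrix.neg_mulVec, dotProduct_neg, Matrix.add_mulVec,
      dotProduct_add, hsym] at h3
    linarith
  have hneg : a ⬝ᵥ M *ᵥ a + b ⬝ᵥ M *ᵥ b < 0 := by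
    rcases habs with h | h
    · have := hquad a h; have := hquad0 b; linarith
    · have := hquad b h; have := hquad0 a; linarith
  rw [key] at hre
  by_contra hc
  push_neg at hc
  have h4 : 0 ≤ μ.re * ∑ i, Complex.normSq (v i) := mul_nonneg hc htpos.le
  linarith

theorem stmt14 {S m : ℕ} [NeZero S] [NeZero m]
    (γ : ℝ) (hγ : γ ∈ Set.Ioo (0:ℝ) 1)
    (Φ : Matrix (Fin S) (Fin m) ℝ) (hΦ : Φ.rank = m)
    (D : Matrix (Fin S) (Fin S) ℝ)
    (hDdiag : ∀ i j, i ≠ j → D i j = 0) (hDpos : ∀ i, 0 < D i i)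
    (P : Matrix (Fin S) (Fin S) ℝ)
    (hPnonneg : ∀ i j, 0 ≤ P i j) (hProw : ∀ i, ∑ j, P i j = 1)
    (B : ℕ → Matrix (Fin m) (Fin m) ℝ)
    (hB : ∀ n, B n = Φᵀ * D * ((γ ^ n) • P ^ n - 1) * Φ) :
    Tendsto (fun n => B n + (B n)ᵀ) atTop
        (nhds (-(2 : ℝ) • (Φᵀ * D * Φ))) ∧
    ((2 : ℝ) • (Φᵀ * D * Φ)).PosDef ∧
    ∃ N : ℕ, ∀ n ≥ N,
      (-(B n + (B n)ᵀ)).PosDef ∧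
      ∀ μ ∈ spectrum ℂ ((B n).map (Complex.ofReal)), μ.re < 0 := by
  obtain ⟨hγ0, hγ1⟩ := hγ
  set A := Φᵀ * D * Φ with hAdef
  -- D is symmetric
  have hD : Dᵀ = D := by
    ext i j
    by_cases h : i = j
    · rw [h, Matrix.transpose_apply]
    · rw [Matrix.transpose_apply, hDdiag j i (Ne.symm h), hDdiag i j h]
  have hAsymm : Aᵀ = A := by
    rw [hAdef, transpose_mul, transpose_mul, transpose_transpose, hD, Matrix.mul_assoc]
  -- Part 1 : convergence
  have hent : ∀ n, (∀ i j, 0 ≤ (P ^ n) i j) ∧ ∀ i, ∑ j, (P ^ n) i j = 1 := by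
    intro n
    induction n with
    | zero => constructor <;> simp [Matrix.one_apply] <;> intro i j <;> positivity
    | succ n ih =>
      constructor
      · intro i j
        rw [pow_succ, Matrix.mul_apply]
        exact Finset.sum_nonneg fun k _ => mul_nonneg (ih.1 i k) (hPnonneg k j)
      · intro i
        simp only [pow_succ, Matrix.mul_apply]
        rw [Finset.sum_comm]
        calc ∑ k, ∑ j, (P ^ n) i k * P k j = ∑ k, (P ^ n) i k := by
              refine Finset.sum_congr rfl fun k _ => ?_
              rw [← Finset.mul_sum, hProw k, mul_one]
          _ = 1 := ih.2 i
  have hle : ∀ n i j, (P ^ n) i j ≤ 1 := by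
    intro n i j
    calc (P ^ n) i j ≤ ∑ k, (P ^ n) i k :=
          Finset.single_le_sum (fun k _ => (hent n).1 i k) (Finset.mem_univ j)
      _ = 1 := (hent n).2 i
  have hZ : Tendsto (fun n => (γ ^ n) • P ^ n) atTop
      (nhds (0 : Matrix (Fin S) (Fin S) ℝ)) := by
    refine tendsto_pi_nhds.mpr ?_
    intro i
    rw [tendsto_pi_nhds]
    intro j
    have h0 : Tendsto (fun n => γ ^ n) atTop (nhds (0:ℝ)) :=
      tendsto_pow_atTop_nhds_zero_of_lt_one hγ0.le hγ1
    refine squeeze_zero (fun n => ?_) (fun n => ?_) h0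
    · exact mul_nonneg (by positivity) ((hent n).1 i j)
    · show γ ^ n * (P ^ n) i j ≤ γ ^ n
      nth_rewrite 2 [← mul_one (γ ^ n)]
      exact mul_le_mul_of_nonneg_left (hle n i j) (by positivity)
  have htend : Tendsto (fun n => B n + (B n)ᵀ) atTop (nhds (-(2 : ℝ) • A)) := by
    have hcont : Continuous (fun M : Matrix (Fin S) (Fin S) ℝ =>
        Φᵀ * D * (M - 1) * Φ + (Φᵀ * D * (M - 1) * Φ)ᵀ) := by
      have h1 : Continuous (fun M : Matrix (Fin S) (Fin S) ℝ => Φᵀ * D * (M - 1) * Φ) :=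
        (((continuous_const.matrix_mul (continuous_id.sub continuous_const))).matrix_mul
          continuous_const)
      exact h1.add h1.matrix_transpose
    have h2 := (hcont.tendsto 0).comp hZ
    have h3 : (fun n => B n + (B n)ᵀ) = (fun M : Matrix (Fin S) (Fin S) ℝ =>
        Φᵀ * D * (M - 1) * Φ + (Φᵀ * D * (M - 1) * Φ)ᵀ) ∘ (fun n => (γ ^ n) • P ^ n) := by
      funext n
      simp [hB n, Function.comp]
    rw [h3]
    convert h2 using 2
    simp only [zero_sub, Matrix.mul_neg, Matrix.mul_one, Matrix.neg_mul, transpose_neg, hAsymm,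
      ← hAdef]
    rw [neg_smul, ← neg_add, two_smul]
  -- Part 2 : positive definiteness of 2A
  have hinj : Function.Injective Φ.mulVecLin := by
    rw [← LinearMap.ker_eq_bot]
    have h := LinearMap.finrank_range_add_finrank_ker Φ.mulVecLin
    rw [show Module.finrank ℝ (LinearMap.range Φ.mulVecLin) = Φ.rank from rfl, hΦ,
      Module.finrank_pi] at h
    have h0 : Module.finrank ℝ (LinearMap.ker Φ.mulVecLin) = 0 := by simpa using h
    exact Submodule.finrank_eq_zero.mp h0
  have hApos : ∀ x : Fin m → ℝ, x ≠ 0 → 0 < x ⬝ᵥ A *ᵥ x := by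
    intro x hx
    have hy : Φ *ᵥ x ≠ 0 := by
      intro h
      exact hx (hinj (by simpa [Matrix.mulVecLin_apply] using h))
    set y := Φ *ᵥ x with hydef
    have h1 : x ⬝ᵥ A *ᵥ x = y ⬝ᵥ D *ᵥ y := by
      rw [hAdef, ← Matrix.mulVec_mulVec, ← Matrix.mulVec_mulVec, Matrix.dotProduct_mulVec x Φᵀ,
        Matrix.vecMul_transpose, Matrix.dotProduct_mulVec y D]
    rw [h1]
    have h2 : y ⬝ᵥ D *ᵥ y = ∑ i, D i i * (y i)^2 := by
      simp only [dotProduct, mulVec, dotProduct]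
      refine Finset.sum_congr rfl fun i _ => ?_
      rw [Finset.sum_eq_single i (fun j _ hj => by rw [hDdiag i j (Ne.symm hj), zero_mul])
        (by simp)]
      ring
    rw [h2]
    obtain ⟨i, hi0⟩ := Function.ne_iff.mp hy
    have hi : y i ≠ 0 := by simpa using hi0
    refine Finset.sum_pos' (fun j _ => mul_nonneg (hDpos j).le (sq_nonneg _))
      ⟨i, Finset.mem_univ i, mul_pos (hDpos i) (by positivity)⟩
  have h2Apos : ∀ x : Fin m → ℝ, x ≠ 0 → 0 < x ⬝ᵥ ((2:ℝ) • A) *ᵥ x := by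
    intro x hx
    rw [Matrix.smul_mulVec, dotProduct_smul, smul_eq_mul]
    exact mul_pos two_pos (hApos x hx)
  have h2Aherm : ((2 : ℝ) • A).IsHermitian := by
    show ((2 : ℝ) • A)ᴴ = (2 : ℝ) • A
    rw [conjTranspose_eq_transpose_of_trivial, transpose_smul, hAsymm]
  have hPD2A : ((2 : ℝ) • A).PosDef := by
    refine Matrix.PosDef.of_dotProduct_mulVec_pos h2Aherm fun x hx => ?_
    rw [star_trivial]
    exact h2Apos x hx
  refine ⟨htend, hPD2A, ?_⟩
  -- Part 3
  obtain ⟨c, hc, hcoer⟩ := coercive_of_pos ((2:ℝ) • A) h2Apos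
  set ε := c / ((m:ℝ)^2 + 1) with hεdef
  have hε : 0 < ε := by positivity
  have hRtend : Tendsto (fun n => (B n + (B n)ᵀ) + (2:ℝ) • A) atTop
      (nhds (0 : Matrix (Fin m) (Fin m) ℝ)) := by
    have := htend.add (tendsto_const_nhds (x := (2:ℝ) • A))
    simpa [neg_smul] using this
  have hsmall : ∀ᶠ n in atTop, ∀ i j, |((B n + (B n)ᵀ) + (2:ℝ) • A) i j| < ε := by
    refine eventually_all.2 fun i => eventually_all.2 fun j => ?_
    have hij : Tendsto (fun n => ((B n + (B n)ᵀ) + (2:ℝ) • A) i j) atTop (nhds (0:ℝ)) := by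
      have h1 := tendsto_pi_nhds.mp (tendsto_pi_nhds.mp hRtend i) j
      simpa using h1
    have := NormedAddCommGroup.tendsto_nhds_zero.mp hij ε hε
    simpa [Real.norm_eq_abs] using this
  obtain ⟨N, hN⟩ := eventually_atTop.mp hsmall
  refine ⟨N, fun n hn => ?_⟩
  set R := (B n + (B n)ᵀ) + (2:ℝ) • A with hRdef
  have hRsum : ∑ i, ∑ j, |R i j| < c := by
    calc ∑ i, ∑ j, |R i j| ≤ ∑ _i : Fin m, ∑ _j : Fin m, ε := by
          refine Finset.sum_le_sum fun i _ => Finset.sum_le_sum fun j _ => (hN n hn i j).le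
      _ = (m:ℝ)^2 * ε := by simp [Finset.sum_const]; ring
      _ < c := by
          rw [hεdef]
          rw [div_eq_iff (by positivity : ((m:ℝ)^2 + 1) ≠ 0)] at *
          have : (m:ℝ)^2 < (m:ℝ)^2 + 1 := by linarith
          calc (m:ℝ)^2 * (c / ((m:ℝ)^2 + 1)) < ((m:ℝ)^2 + 1) * (c / ((m:ℝ)^2 + 1)) := by
                apply mul_lt_mul_of_pos_right this (by positivity)
            _ = c := by field_simp
  have hmat : -(B n + (B n)ᵀ) = (2:ℝ) • A - R := by
    rw [hRdef]; abel
  have hposdef : (-(B n + (B n)ᵀ)).PosDef := by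
    refine Matrix.PosDef.of_dotProduct_mulVec_pos ?_ fun x hx => ?_
    · show (-(B n + (B n)ᵀ))ᴴ = -(B n + (B n)ᵀ)
      rw [conjTranspose_eq_transpose_of_trivial, transpose_neg, transpose_add,
        transpose_transpose, add_comm]
    · rw [star_trivial, hmat, Matrix.sub_mulVec, dotProduct_sub]
      have h1 := hcoer x
      have h2 : |x ⬝ᵥ R *ᵥ x| ≤ (∑ i, ∑ j, |R i j|) * ‖x‖^2 := quad_abs_bound R x
      have hxn : (0:ℝ) < ‖x‖ := norm_pos_iff.mpr hx
      have h3 : x ⬝ᵥ R *ᵥ x ≤ (∑ i, ∑ j, |R i j|) * ‖x‖^2 := (le_abs_self _).trans h2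
      have h4 : (∑ i, ∑ j, |R i j|) * ‖x‖^2 < c * ‖x‖^2 :=
        mul_lt_mul_of_pos_right hRsum (by positivity)
      linarith
  exact ⟨hposdef, fun μ hμ => re_lt_zero_of_spectrum (B n) hposdef μ hμ⟩
end

section
/- Combining the previous results: for Φ full column rank, D diagonal positive definite, P row-stochastic, γ ∈ (0,1), there exist a positive integer n̄* and α* > 0 such that for every n ≥ n̄* and 0 < α ≤ α*, the iteration θ_{k+1} = θ_k + α Φ^T D(T^n(Φθ_k) − Φθ_k) converges to the unique solution of Φ^T D(T^n(Φθ) − Φθ) = 0. -/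
open Matrix BigOperators Filter

section Aux

lemma aux_dp_nonneg {n : ℕ} (v : Fin n → ℝ) : 0 ≤ v ⬝ᵥ v :=
  Finset.sum_nonneg fun _ _ => mul_self_nonneg _

lemma aux_dp_pos {n : ℕ} {v : Fin n → ℝ} (hv : v ≠ 0) : 0 < v ⬝ᵥ v :=
  lt_of_le_of_ne (aux_dp_nonneg v) (fun h => hv (dotProduct_self_eq_zero.1 h.symm))

lemma aux_sq_le {n : ℕ} (v : Fin n → ℝ) (j : Fin n) : v j * v j ≤ v ⬝ᵥ v :=
  Finset.single_le_sum (f := fun k => v k * v k) (fun _ _ => mul_self_nonneg _)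
    (Finset.mem_univ j)

lemma aux_Q_mulVec_le {a b : ℕ} (A : Matrix (Fin a) (Fin b) ℝ) (x : Fin b → ℝ) :
    A.mulVec x ⬝ᵥ A.mulVec x ≤ (∑ i, ∑ j, A i j ^ 2) * (x ⬝ᵥ x) := by
  have hx : x ⬝ᵥ x = ∑ j, x j ^ 2 := by simp [dotProduct, sq]
  have h : A.mulVec x ⬝ᵥ A.mulVec x = ∑ i, (∑ j, A i j * x j) ^ 2 := by
    simp [dotProduct, Matrix.mulVec, sq]
  rw [h, hx, Finset.sum_mul]
  exact Finset.sum_le_sum fun i _ => Finset.sum_mul_sq_le_sq_mul_sq _ _ _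

lemma aux_diag_mulVec {S : ℕ} (D : Matrix (Fin S) (Fin S) ℝ)
    (hDdiag : ∀ i j, i ≠ j → D i j = 0) (y : Fin S → ℝ) (i : Fin S) :
    D.mulVec y i = D i i * y i := by
  unfold Matrix.mulVec dotProduct
  rw [Finset.sum_eq_single i]
  · intro b _ hb
    show D i b * y b = 0
    rw [hDdiag i b (Ne.symm hb), zero_mul]
  · intro h; exact absurd (Finset.mem_univ i) h

lemma aux_inj {S m : ℕ} (Φ : Matrix (Fin S) (Fin m) ℝ) (hΦ : Φ.rank = m) :
    Function.Injective Φ.mulVec := by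
  have h := Φ.mulVecLin.finrank_range_add_finrank_ker
  have hdom : Module.finrank ℝ (Fin m → ℝ) = m := by
    simp [Module.finrank_pi]
  rw [hdom] at h
  have hrank : Module.finrank ℝ (LinearMap.range Φ.mulVecLin) = m := hΦ
  rw [hrank] at h
  have hker : Module.finrank ℝ (LinearMap.ker Φ.mulVecLin) = 0 := by omega
  have hbot : LinearMap.ker Φ.mulVecLin = ⊥ := Submodule.finrank_eq_zero.1 hker
  have hinj := LinearMap.ker_eq_bot.1 hbot
  intro a b hab
  exact hinj (by simpa [Matrix.mulVecLin_apply] using hab)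

lemma aux_mu {S m : ℕ} [NeZero m] (Φ : Matrix (Fin S) (Fin m) ℝ)
    (hinj : Function.Injective Φ.mulVec) :
    ∃ μ > (0:ℝ), ∀ x : Fin m → ℝ, μ * (x ⬝ᵥ x) ≤ Φ.mulVec x ⬝ᵥ Φ.mulVec x := by
  have hdp : ∀ x : EuclideanSpace ℝ (Fin m), (x : Fin m → ℝ) ⬝ᵥ x = ‖x‖ ^ 2 := by
    intro x
    rw [← real_inner_self_eq_norm_sq, PiLp.inner_apply]
    simp [dotProduct, RCLike.inner_apply, mul_comm, sq]
  have hA : Continuous (fun x : EuclideanSpace ℝ (Fin m) => Φ.mulVec (x : Fin m → ℝ)) :=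
    (LinearMap.continuous_of_finiteDimensional
      (Φ.mulVecLin : (Fin m → ℝ) →ₗ[ℝ] (Fin S → ℝ))).comp
      (PiLp.continuous_ofLp (p := 2) (β := fun _ : Fin m => ℝ))
  have hQc : Continuous (fun v : Fin S → ℝ => v ⬝ᵥ v) := by
    simp only [dotProduct]; fun_prop
  have hcont : Continuous (fun x : EuclideanSpace ℝ (Fin m) =>
      Φ.mulVec (x : Fin m → ℝ) ⬝ᵥ Φ.mulVec (x : Fin m → ℝ)) := hQc.comp hA
  have hsph : IsCompact (Metric.sphere (0 : EuclideanSpace ℝ (Fin m)) 1) := isCompact_sphere _ _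
  have hne : (Metric.sphere (0 : EuclideanSpace ℝ (Fin m)) 1).Nonempty :=
    NormedSpace.sphere_nonempty.2 zero_le_one
  obtain ⟨x₀, hx₀, hmin⟩ := hsph.exists_isMinOn hne hcont.continuousOn
  have hx₀ne : (x₀ : Fin m → ℝ) ≠ 0 := by
    intro h
    have h1 : ‖x₀‖ = 1 := by simpa using Metric.mem_sphere.1 hx₀
    rw [show x₀ = 0 from (WithLp.ofLp_eq_zero 2).1 h] at h1
    simp at h1
  have hΦx₀ : Φ.mulVec (x₀ : Fin m → ℝ) ≠ 0 := by
    intro h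
    exact hx₀ne (hinj (by simpa [Matrix.mulVec_zero] using h))
  refine ⟨Φ.mulVec (x₀ : Fin m → ℝ) ⬝ᵥ Φ.mulVec (x₀ : Fin m → ℝ), aux_dp_pos hΦx₀, ?_⟩
  intro x
  by_cases hx : x = 0
  · simp [hx]
  · set q : ℝ := x ⬝ᵥ x with hq
    have hqpos : 0 < q := aux_dp_pos hx
    set t : ℝ := Real.sqrt q with htdef
    have htpos : 0 < t := Real.sqrt_pos.2 hqpos
    have ht2 : t ^ 2 = q := Real.sq_sqrt hqpos.le
    set u : EuclideanSpace ℝ (Fin m) := WithLp.toLp 2 (t⁻¹ • x : Fin m → ℝ) with hu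
    have huQ : (u : Fin m → ℝ) ⬝ᵥ u = 1 := by
      show (t⁻¹ • x) ⬝ᵥ (t⁻¹ • x) = 1
      rw [smul_dotProduct, dotProduct_smul, smul_eq_mul, smul_eq_mul, ← hq]
      field_simp
      rw [← ht2]
    have hunorm : ‖u‖ = 1 := by
      have := hdp u
      rw [huQ] at this
      nlinarith [norm_nonneg u]
    have hmem : u ∈ Metric.sphere (0 : EuclideanSpace ℝ (Fin m)) 1 := by
      simpa using hunorm
    have hle := hmin hmem
    have hgu : Φ.mulVec (u : Fin m → ℝ) ⬝ᵥ Φ.mulVec (u : Fin m → ℝ)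
        = q⁻¹ * (Φ.mulVec x ⬝ᵥ Φ.mulVec x) := by
      show Φ.mulVec (t⁻¹ • x) ⬝ᵥ Φ.mulVec (t⁻¹ • x) = q⁻¹ * (Φ.mulVec x ⬝ᵥ Φ.mulVec x)
      rw [Matrix.mulVec_smul, smul_dotProduct, dotProduct_smul, smul_eq_mul, smul_eq_mul, ← ht2]
      field_simp
    have hle' : Φ.mulVec (x₀:Fin m → ℝ) ⬝ᵥ Φ.mulVec (x₀:Fin m → ℝ)
        ≤ q⁻¹ * (Φ.mulVec x ⬝ᵥ Φ.mulVec x) := by rw [← hgu]; exact hle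
    calc (Φ.mulVec (x₀:Fin m → ℝ) ⬝ᵥ Φ.mulVec (x₀:Fin m → ℝ)) * (x ⬝ᵥ x)
        ≤ (q⁻¹ * (Φ.mulVec x ⬝ᵥ Φ.mulVec x)) * q := mul_le_mul_of_nonneg_right hle' hqpos.le
      _ = Φ.mulVec x ⬝ᵥ Φ.mulVec x := by field_simp

lemma aux_pow_stoch {S : ℕ} (P : Matrix (Fin S) (Fin S) ℝ)
    (hPnonneg : ∀ i j, 0 ≤ P i j) (hProw : ∀ i, ∑ j, P i j = 1) (n : ℕ) :
    (∀ i j, 0 ≤ (P ^ n) i j) ∧ (∀ i, ∑ j, (P ^ n) i j = 1) := by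
  induction n with
  | zero =>
    constructor
    · intro i j
      by_cases h : i = j <;> simp [pow_zero, Matrix.one_apply, h]
    · intro i
      simp [pow_zero, Matrix.one_apply]
  | succ n ih =>
    rw [pow_succ]
    constructor
    · intro i j
      rw [Matrix.mul_apply]
      exact Finset.sum_nonneg fun k _ => mul_nonneg (ih.1 i k) (hPnonneg k j)
    · intro i
      simp only [Matrix.mul_apply]
      rw [Finset.sum_comm]
      calc ∑ k, ∑ j, (P ^ n) i k * P k j
          = ∑ k, (P ^ n) i k * ∑ j, P k j := by
            refine Finset.sum_congr rfl fun k _ => ?_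
            rw [Finset.mul_sum]
        _ = 1 := by
            simp only [hProw, mul_one]
            exact ih.2 i

lemma aux_pow_le_one {S : ℕ} (P : Matrix (Fin S) (Fin S) ℝ)
    (hPnonneg : ∀ i j, 0 ≤ P i j) (hProw : ∀ i, ∑ j, P i j = 1) (n : ℕ) (i j : Fin S) :
    (P ^ n) i j ≤ 1 := by
  obtain ⟨h1, h2⟩ := aux_pow_stoch P hPnonneg hProw n
  calc (P ^ n) i j ≤ ∑ k, (P ^ n) i k :=
        Finset.single_le_sum (fun k _ => h1 i k) (Finset.mem_univ j)
    _ = 1 := h2 i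

lemma aux_cross {S : ℕ} (D A : Matrix (Fin S) (Fin S) ℝ)
    (hDdiag : ∀ i j, i ≠ j → D i j = 0) (hD0 : ∀ i, 0 ≤ D i i)
    (Dmax : ℝ) (hDmax : ∀ i, D i i ≤ Dmax)
    (hA : ∀ i j, |A i j| ≤ 1) (y : Fin S → ℝ) :
    |y ⬝ᵥ D.mulVec (A.mulVec y)| ≤ Dmax * S ^ 2 * (y ⬝ᵥ y) := by
  set Q := y ⬝ᵥ y with hQ
  have hQ0 : 0 ≤ Q := aux_dp_nonneg y
  have hyy : ∀ i j, |y i| * |y j| ≤ Q := by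
    intro i j
    have h1 := aux_sq_le y i
    have h2 := aux_sq_le y j
    nlinarith [abs_nonneg (y i), abs_nonneg (y j), sq_abs (y i), sq_abs (y j),
      sq_nonneg (|y i| - |y j|)]
  have hw : ∀ i, |A.mulVec y i| ≤ ∑ j, |y j| := by
    intro i
    calc |A.mulVec y i| ≤ ∑ j, |A i j * y j| := by
          unfold Matrix.mulVec dotProduct
          exact Finset.abs_sum_le_sum_abs _ _
      _ ≤ ∑ j, |y j| := by
          refine Finset.sum_le_sum fun j _ => ?_
          rw [abs_mul]
          calc |A i j| * |y j| ≤ 1 * |y j| :=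
                mul_le_mul_of_nonneg_right (hA i j) (abs_nonneg _)
            _ = |y j| := one_mul _
  have hterm : ∀ i, |y i * D.mulVec (A.mulVec y) i| ≤ Dmax * (S * Q) := by
    intro i
    rw [aux_diag_mulVec D hDdiag]
    have h1 : |y i * (D i i * A.mulVec y i)| = D i i * (|y i| * |A.mulVec y i|) := by
      rw [abs_mul, abs_mul, abs_of_nonneg (hD0 i)]; ring
    rw [h1]
    have h2 : |y i| * |A.mulVec y i| ≤ S * Q := by
      calc |y i| * |A.mulVec y i| ≤ |y i| * ∑ j, |y j| :=
            mul_le_mul_of_nonneg_left (hw i) (abs_nonneg _)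
        _ = ∑ j, |y i| * |y j| := by rw [Finset.mul_sum]
        _ ≤ ∑ _j : Fin S, Q := Finset.sum_le_sum fun j _ => hyy i j
        _ = S * Q := by simp [Finset.sum_const, nsmul_eq_mul]
    calc D i i * (|y i| * |A.mulVec y i|) ≤ D i i * (S * Q) :=
          mul_le_mul_of_nonneg_left h2 (hD0 i)
      _ ≤ Dmax * (S * Q) := by
          apply mul_le_mul_of_nonneg_right (hDmax i)
          positivity
  calc |y ⬝ᵥ D.mulVec (A.mulVec y)| ≤ ∑ i, |y i * D.mulVec (A.mulVec y) i| := by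
        unfold dotProduct
        exact Finset.abs_sum_le_sum_abs _ _
    _ ≤ ∑ _i : Fin S, Dmax * (S * Q) := Finset.sum_le_sum fun i _ => hterm i
    _ = Dmax * S ^ 2 * Q := by
        simp [Finset.sum_const, nsmul_eq_mul]; ring

end Aux

set_option maxHeartbeats 2000000 in
theorem stmt17 {S m : ℕ} [NeZero S] [NeZero m]
    (γ : ℝ) (hγ : γ ∈ Set.Ioo (0:ℝ) 1)
    (Φ : Matrix (Fin S) (Fin m) ℝ) (hΦ : Φ.rank = m)
    (D : Matrix (Fin S) (Fin S) ℝ)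
    (hDdiag : ∀ i j, i ≠ j → D i j = 0) (hDpos : ∀ i, 0 < D i i)
    (P : Matrix (Fin S) (Fin S) ℝ)
    (hPnonneg : ∀ i j, 0 ≤ P i j) (hProw : ∀ i, ∑ j, P i j = 1)
    (R : Fin S → ℝ)
    (Tn : ℕ → (Fin S → ℝ) → (Fin S → ℝ))
    (hTn : ∀ n x, Tn n x = (∑ k ∈ Finset.range n, (γ ^ k) • ((P ^ k).mulVec R))
        + (γ ^ n) • ((P ^ n).mulVec x)) :
    ∃ (N : ℕ) (αstar : ℝ), 0 < αstar ∧
      ∀ n ≥ N, ∀ α : ℝ, 0 < α → α ≤ αstar →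
        ∃ θstar : Fin m → ℝ,
          (Φᵀ * D).mulVec (Tn n (Φ.mulVec θstar) - Φ.mulVec θstar) = 0 ∧
          (∀ θ' : Fin m → ℝ,
            (Φᵀ * D).mulVec (Tn n (Φ.mulVec θ') - Φ.mulVec θ') = 0 → θ' = θstar) ∧
          ∀ θ : ℕ → (Fin m → ℝ),
            (∀ k, θ (k + 1) = θ k
              + α • ((Φᵀ * D).mulVec (Tn n (Φ.mulVec (θ k)) - Φ.mulVec (θ k)))) →
            Tendsto θ atTop (nhds θstar) := by
  obtain ⟨hγ0, hγ1⟩ := hγ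
  have hSpos : 0 < S := Nat.pos_of_ne_zero (NeZero.ne S)
  have i0 : Fin S := ⟨0, hSpos⟩
  -- constants from D
  obtain ⟨imin, _, hminD⟩ := Finset.exists_min_image Finset.univ (fun i => D i i)
    ⟨i0, Finset.mem_univ i0⟩
  obtain ⟨imax, _, hmaxD⟩ := Finset.exists_max_image Finset.univ (fun i => D i i)
    ⟨i0, Finset.mem_univ i0⟩
  set d : ℝ := D imin imin with hd_def
  set Dmax : ℝ := D imax imax with hDmax_def
  have hd : 0 < d := hDpos imin
  have hdle : ∀ i, d ≤ D i i := fun i => hminD i (Finset.mem_univ i)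
  have hDmaxle : ∀ i, D i i ≤ Dmax := fun i => hmaxD i (Finset.mem_univ i)
  have hDmaxpos : 0 < Dmax := lt_of_lt_of_le (hDpos i0) (hDmaxle i0)
  set C : ℝ := Dmax * S ^ 2 with hC_def
  have hC : 0 < C := by positivity
  -- μ from full rank
  have hinj : Function.Injective Φ.mulVec := aux_inj Φ hΦ
  obtain ⟨μ, hμ0, hμle⟩ := aux_mu Φ hinj
  -- matrices
  set G : ℕ → Matrix (Fin S) (Fin S) ℝ := fun n => γ ^ n • P ^ n - 1 with hG_def
  set B : ℕ → Matrix (Fin m) (Fin m) ℝ := fun n => Φᵀ * D * G n * Φ with hB_def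
  set bv : ℕ → (Fin m → ℝ) :=
    fun n => (Φᵀ * D).mulVec (∑ k ∈ Finset.range n, (γ ^ k) • ((P ^ k).mulVec R)) with hbv_def
  -- nested mulVec form
  have hBnest : ∀ n (x : Fin m → ℝ),
      (B n).mulVec x = Φᵀ.mulVec (D.mulVec ((G n).mulVec (Φ.mulVec x))) := by
    intro n x
    simp only [hB_def, Matrix.mulVec_mulVec, ← Matrix.mul_assoc]
  -- affine form
  have haff : ∀ n (θ : Fin m → ℝ),
      (Φᵀ * D).mulVec (Tn n (Φ.mulVec θ) - Φ.mulVec θ) = bv n + (B n).mulVec θ := by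
    intro n θ
    rw [hTn]
    have h1 : (∑ k ∈ Finset.range n, (γ ^ k) • ((P ^ k).mulVec R))
        + (γ ^ n) • ((P ^ n).mulVec (Φ.mulVec θ)) - Φ.mulVec θ
        = (∑ k ∈ Finset.range n, (γ ^ k) • ((P ^ k).mulVec R))
          + (G n).mulVec (Φ.mulVec θ) := by
      rw [hG_def]
      simp only [Matrix.sub_mulVec, Matrix.smul_mulVec, Matrix.one_mulVec]
      abel
    rw [h1, Matrix.mulVec_add, hbv_def]
    congr 1
    simp only [Matrix.mulVec_mulVec, hB_def, ← Matrix.mul_assoc]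
  -- quadratic upper bound (cross term)
  have hcross : ∀ n (y : Fin S → ℝ),
      |y ⬝ᵥ D.mulVec ((P ^ n).mulVec y)| ≤ C * (y ⬝ᵥ y) := by
    intro n y
    have := aux_cross D (P ^ n) hDdiag (fun i => (hDpos i).le) Dmax hDmaxle
      (fun i j => by
        rw [abs_of_nonneg ((aux_pow_stoch P hPnonneg hProw n).1 i j)]
        exact aux_pow_le_one P hPnonneg hProw n i j) y
    simpa [hC_def] using this
  have hdiag_low : ∀ y : Fin S → ℝ, d * (y ⬝ᵥ y) ≤ y ⬝ᵥ D.mulVec y := by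
    intro y
    have h1 : y ⬝ᵥ D.mulVec y = ∑ i, D i i * (y i * y i) := by
      unfold dotProduct
      refine Finset.sum_congr rfl fun i _ => ?_
      rw [aux_diag_mulVec D hDdiag]; ring
    have h2 : d * (y ⬝ᵥ y) = ∑ i, d * (y i * y i) := by
      unfold dotProduct; rw [Finset.mul_sum]
    rw [h1, h2]
    exact Finset.sum_le_sum fun i _ =>
      mul_le_mul_of_nonneg_right (hdle i) (mul_self_nonneg _)
  -- quadratic form identity
  have hquadform : ∀ n (x : Fin m → ℝ),
      x ⬝ᵥ (B n).mulVec x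
        = γ ^ n * ((Φ.mulVec x) ⬝ᵥ D.mulVec ((P ^ n).mulVec (Φ.mulVec x)))
          - (Φ.mulVec x) ⬝ᵥ D.mulVec (Φ.mulVec x) := by
    intro n x
    rw [hBnest, Matrix.dotProduct_mulVec, Matrix.vecMul_transpose]
    have hGy : (G n).mulVec (Φ.mulVec x)
        = γ ^ n • ((P ^ n).mulVec (Φ.mulVec x)) - Φ.mulVec x := by
      rw [hG_def]
      simp only [Matrix.sub_mulVec, Matrix.smul_mulVec, Matrix.one_mulVec]
    rw [hGy, Matrix.mulVec_sub, Matrix.mulVec_smul, dotProduct_sub, dotProduct_smul,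
      smul_eq_mul]
  -- choose N
  have htend : Tendsto (fun n : ℕ => γ ^ n) atTop (nhds 0) :=
    tendsto_pow_atTop_nhds_zero_of_lt_one hγ0.le hγ1
  have hev : ∀ᶠ n in atTop, γ ^ n < d / (2 * C) :=
    htend.eventually (gt_mem_nhds (by positivity))
  obtain ⟨N, hN⟩ := Filter.eventually_atTop.1 hev
  have hγnC : ∀ n ≥ N, γ ^ n * C ≤ d / 2 := by
    intro n hn
    have := hN n hn
    rw [lt_div_iff₀ (by positivity : (0:ℝ) < 2 * C)] at this
    nlinarith
  -- set c
  set c : ℝ := μ * d / 2 with hc_def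
  have hc : 0 < c := by positivity
  -- quadratic bound
  have hquad : ∀ n ≥ N, ∀ x : Fin m → ℝ,
      x ⬝ᵥ (B n).mulVec x ≤ -c * (x ⬝ᵥ x) := by
    intro n hn x
    set y := Φ.mulVec x with hy
    have hQy0 : 0 ≤ y ⬝ᵥ y := aux_dp_nonneg y
    have h1 : γ ^ n * (y ⬝ᵥ D.mulVec ((P ^ n).mulVec y)) ≤ (d / 2) * (y ⬝ᵥ y) := by
      have hpow : 0 < γ ^ n := pow_pos hγ0 n
      have habs := (abs_le.1 (hcross n y)).2
      calc γ ^ n * (y ⬝ᵥ D.mulVec ((P ^ n).mulVec y))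
          ≤ γ ^ n * (C * (y ⬝ᵥ y)) := mul_le_mul_of_nonneg_left habs hpow.le
        _ = (γ ^ n * C) * (y ⬝ᵥ y) := by ring
        _ ≤ (d / 2) * (y ⬝ᵥ y) := mul_le_mul_of_nonneg_right (hγnC n hn) hQy0
    have h2 := hdiag_low y
    have h3 := hμle x
    rw [hquadform]
    have h6 : (d / 2) * (μ * (x ⬝ᵥ x)) ≤ (d / 2) * (y ⬝ᵥ y) :=
      mul_le_mul_of_nonneg_left h3 (by positivity)
    have h7 : -c * (x ⬝ᵥ x) = -((d / 2) * (μ * (x ⬝ᵥ x))) := by rw [hc_def]; ring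
    rw [h7]
    linarith
  -- uniform operator bound
  set M : ℝ := (∑ i, ∑ j, Φᵀ i j ^ 2) * ((∑ i, ∑ j, D i j ^ 2)
      * ((4 * (S:ℝ) ^ 2) * (∑ i, ∑ j, Φ i j ^ 2))) + 1 with hM_def
  have hM1 : (1:ℝ) ≤ M := by
    have : (0:ℝ) ≤ (∑ i, ∑ j, Φᵀ i j ^ 2) * ((∑ i, ∑ j, D i j ^ 2)
        * ((4 * (S:ℝ) ^ 2) * (∑ i, ∑ j, Φ i j ^ 2))) := by positivity
    linarith
  have hMpos : 0 < M := lt_of_lt_of_le one_pos hM1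
  have hGsq : ∀ n, (∑ i, ∑ j, (G n) i j ^ 2) ≤ 4 * (S:ℝ) ^ 2 := by
    intro n
    have hentry : ∀ i j, (G n) i j ^ 2 ≤ 4 := by
      intro i j
      have h0 : (G n) i j = γ ^ n * (P ^ n) i j - (1 : Matrix (Fin S) (Fin S) ℝ) i j := by
        simp [hG_def, Matrix.sub_apply, Matrix.smul_apply, smul_eq_mul]
      have hp0 := (aux_pow_stoch P hPnonneg hProw n).1 i j
      have hp1 := aux_pow_le_one P hPnonneg hProw n i j
      have hγn0 : 0 ≤ γ ^ n := (pow_pos hγ0 n).le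
      have hγn1 : γ ^ n ≤ 1 := pow_le_one₀ hγ0.le hγ1.le
      rw [h0]
      have ht0 : 0 ≤ γ ^ n * (P ^ n) i j := mul_nonneg hγn0 hp0
      have ht1 : γ ^ n * (P ^ n) i j ≤ 1 := by nlinarith
      by_cases h : i = j
      · subst h
        rw [Matrix.one_apply_eq]
        nlinarith
      · rw [Matrix.one_apply_ne h]
        nlinarith
    calc (∑ i, ∑ j, (G n) i j ^ 2) ≤ ∑ _i : Fin S, ∑ _j : Fin S, (4:ℝ) :=
          Finset.sum_le_sum fun i _ => Finset.sum_le_sum fun j _ => hentry i j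
      _ = 4 * (S:ℝ) ^ 2 := by simp [Finset.sum_const, nsmul_eq_mul]; ring
  have hM : ∀ n (x : Fin m → ℝ),
      (B n).mulVec x ⬝ᵥ (B n).mulVec x ≤ M * (x ⬝ᵥ x) := by
    intro n x
    rw [hBnest]
    set w1 := Φ.mulVec x with hw1
    set w2 := (G n).mulVec w1 with hw2
    set w3 := D.mulVec w2 with hw3
    have hq1 : w1 ⬝ᵥ w1 ≤ (∑ i, ∑ j, Φ i j ^ 2) * (x ⬝ᵥ x) := aux_Q_mulVec_le Φ x
    have hq2 : w2 ⬝ᵥ w2 ≤ (4 * (S:ℝ) ^ 2) * ((∑ i, ∑ j, Φ i j ^ 2) * (x ⬝ᵥ x)) := by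
      calc w2 ⬝ᵥ w2 ≤ (∑ i, ∑ j, (G n) i j ^ 2) * (w1 ⬝ᵥ w1) := aux_Q_mulVec_le _ _
        _ ≤ (4 * (S:ℝ) ^ 2) * (w1 ⬝ᵥ w1) :=
            mul_le_mul_of_nonneg_right (hGsq n) (aux_dp_nonneg w1)
        _ ≤ (4 * (S:ℝ) ^ 2) * ((∑ i, ∑ j, Φ i j ^ 2) * (x ⬝ᵥ x)) := by
            apply mul_le_mul_of_nonneg_left hq1; positivity
    have hq3 : w3 ⬝ᵥ w3 ≤ (∑ i, ∑ j, D i j ^ 2)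
        * ((4 * (S:ℝ) ^ 2) * ((∑ i, ∑ j, Φ i j ^ 2) * (x ⬝ᵥ x))) := by
      calc w3 ⬝ᵥ w3 ≤ (∑ i, ∑ j, D i j ^ 2) * (w2 ⬝ᵥ w2) := aux_Q_mulVec_le _ _
        _ ≤ _ := by apply mul_le_mul_of_nonneg_left hq2; positivity
    calc Φᵀ.mulVec w3 ⬝ᵥ Φᵀ.mulVec w3
        ≤ (∑ i, ∑ j, Φᵀ i j ^ 2) * (w3 ⬝ᵥ w3) := aux_Q_mulVec_le _ _
      _ ≤ (∑ i, ∑ j, Φᵀ i j ^ 2) * ((∑ i, ∑ j, D i j ^ 2)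
            * ((4 * (S:ℝ) ^ 2) * ((∑ i, ∑ j, Φ i j ^ 2) * (x ⬝ᵥ x)))) := by
          apply mul_le_mul_of_nonneg_left hq3; positivity
      _ = ((∑ i, ∑ j, Φᵀ i j ^ 2) * ((∑ i, ∑ j, D i j ^ 2)
            * ((4 * (S:ℝ) ^ 2) * (∑ i, ∑ j, Φ i j ^ 2)))) * (x ⬝ᵥ x) := by ring
      _ ≤ M * (x ⬝ᵥ x) := by
          rw [hM_def, add_mul, one_mul]
          exact le_add_of_nonneg_right (aux_dp_nonneg x)
  -- choose αstar
  have hcM : 0 < c / M := div_pos hc hMpos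
  have h2c : 0 < 1 / (2 * c) := div_pos one_pos (by linarith)
  refine ⟨N, min (c / M) (1 / (2 * c)), lt_min hcM h2c, ?_⟩
  intro n hn α hα0 hαle
  have hαM : α * M ≤ c := by
    have h1 : α ≤ c / M := le_trans hαle (min_le_left _ _)
    rw [le_div_iff₀ hMpos] at h1
    linarith
  have hαc : α * c ≤ 1 / 2 := by
    have h1 : α ≤ 1 / (2 * c) := le_trans hαle (min_le_right _ _)
    rw [le_div_iff₀ (by positivity)] at h1
    linarith
  -- invertibility of B n
  have hBinj : Function.Injective (B n).mulVec := by
    intro a b hab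
    have hz : (B n).mulVec (a - b) = 0 := by
      rw [Matrix.mulVec_sub, hab, sub_self]
    by_contra hne
    have hne' : a - b ≠ 0 := sub_ne_zero.2 hne
    have h1 := hquad n hn (a - b)
    rw [hz] at h1
    simp only [dotProduct_zero] at h1
    have := aux_dp_pos hne'
    have h2 := mul_pos hc this
    linarith
  have hBsurj : Function.Surjective (B n).mulVecLin := by
    rw [← LinearMap.injective_iff_surjective]
    intro a b hab
    exact hBinj (by simpa [Matrix.mulVecLin_apply] using hab)
  obtain ⟨θstar, hθstar⟩ := hBsurj (-(bv n))
  have hθstar' : (B n).mulVec θstar = -(bv n) := by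
    simpa [Matrix.mulVecLin_apply] using hθstar
  have hfix : (Φᵀ * D).mulVec (Tn n (Φ.mulVec θstar) - Φ.mulVec θstar) = 0 := by
    rw [haff, hθstar']; abel
  refine ⟨θstar, hfix, ?_, ?_⟩
  · intro θ' h'
    rw [haff] at h'
    have : (B n).mulVec θ' = (B n).mulVec θstar := by
      rw [hθstar']
      exact eq_neg_of_add_eq_zero_right h'
    exact hBinj this
  · intro θ hrec
    set e : ℕ → (Fin m → ℝ) := fun k => θ k - θstar with he_def
    have herec : ∀ k, e (k + 1) = e k + α • (B n).mulVec (e k) := by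
      intro k
      have h1 : bv n + (B n).mulVec (θ k) = (B n).mulVec (e k) := by
        rw [he_def]
        simp only [Matrix.mulVec_sub, hθstar']
        abel
      rw [he_def]
      simp only [hrec k, haff, h1]
      abel
    have hαcpos : 0 < α * c := mul_pos hα0 hc
    set r : ℝ := 1 - α * c with hr_def
    have hr0 : 0 ≤ r := by rw [hr_def]; linarith
    have hr1 : r < 1 := by rw [hr_def]; linarith
    have hQdec : ∀ k, e (k + 1) ⬝ᵥ e (k + 1) ≤ r * (e k ⬝ᵥ e k) := by
      intro k
      rw [herec k]
      set u := e k with hu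
      set v := (B n).mulVec u with hv
      have hexp : (u + α • v) ⬝ᵥ (u + α • v)
          = u ⬝ᵥ u + 2 * α * (u ⬝ᵥ v) + α ^ 2 * (v ⬝ᵥ v) := by
        simp only [add_dotProduct, dotProduct_add, smul_dotProduct, dotProduct_smul,
          smul_eq_mul]
        rw [dotProduct_comm v u]
        ring
      rw [hexp]
      have h1 : u ⬝ᵥ v ≤ -c * (u ⬝ᵥ u) := hquad n hn u
      have h2 : v ⬝ᵥ v ≤ M * (u ⬝ᵥ u) := hM n u
      have h3 : 0 ≤ u ⬝ᵥ u := aux_dp_nonneg u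
      have h4 : α ^ 2 * (v ⬝ᵥ v) ≤ α ^ 2 * (M * (u ⬝ᵥ u)) :=
        mul_le_mul_of_nonneg_left h2 (sq_nonneg α)
      have h5 : α ^ 2 * (M * (u ⬝ᵥ u)) ≤ α * (c * (u ⬝ᵥ u)) := by
        have ha := mul_le_mul_of_nonneg_right hαM h3
        have hb := mul_le_mul_of_nonneg_left ha hα0.le
        calc α ^ 2 * (M * (u ⬝ᵥ u)) = α * (α * M * (u ⬝ᵥ u)) := by ring
          _ ≤ α * (c * (u ⬝ᵥ u)) := hb
      have h6 : 2 * α * (u ⬝ᵥ v) ≤ 2 * α * (-c * (u ⬝ᵥ u)) :=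
        mul_le_mul_of_nonneg_left h1 (by linarith)
      rw [hr_def]
      have hgoal : (1 - α * c) * (u ⬝ᵥ u) = u ⬝ᵥ u - α * (c * (u ⬝ᵥ u)) := by ring
      rw [hgoal]
      have h7 : 2 * α * (-c * (u ⬝ᵥ u)) = -2 * (α * (c * (u ⬝ᵥ u))) := by ring
      rw [h7] at h6
      linarith
    have hQk : ∀ k, e k ⬝ᵥ e k ≤ r ^ k * (e 0 ⬝ᵥ e 0) := by
      intro k
      induction k with
      | zero => simp
      | succ k ih =>
        calc e (k + 1) ⬝ᵥ e (k + 1) ≤ r * (e k ⬝ᵥ e k) := hQdec k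
          _ ≤ r * (r ^ k * (e 0 ⬝ᵥ e 0)) := mul_le_mul_of_nonneg_left ih hr0
          _ = r ^ (k + 1) * (e 0 ⬝ᵥ e 0) := by ring
    have hQtend : Tendsto (fun k => r ^ k * (e 0 ⬝ᵥ e 0)) atTop (nhds 0) := by
      have := (tendsto_pow_atTop_nhds_zero_of_lt_one hr0 hr1).mul_const (e 0 ⬝ᵥ e 0)
      simpa using this
    have hQe : Tendsto (fun k => e k ⬝ᵥ e k) atTop (nhds 0) := by
      apply squeeze_zero (fun k => aux_dp_nonneg (e k)) hQk hQtend
    rw [tendsto_pi_nhds]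
    intro i
    have hsq : Tendsto (fun k => e k i * e k i) atTop (nhds 0) := by
      apply squeeze_zero (fun k => mul_self_nonneg _) (fun k => aux_sq_le (e k) i) hQe
    have habs : Tendsto (fun k => |e k i|) atTop (nhds 0) := by
      have h := hsq.sqrt
      simp only [Real.sqrt_zero] at h
      convert h using 1
      funext k
      exact (Real.sqrt_mul_self_eq_abs _).symm
    have hei : Tendsto (fun k => e k i) atTop (nhds 0) := by
      rw [tendsto_zero_iff_abs_tendsto_zero]
      convert habs using 1
      rfl
    have : Tendsto (fun k => e k i + θstar i) atTop (nhds (0 + θstar i)) :=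
      hei.add_const (θstar i)
    simp only [zero_add] at this
    convert this using 2 with k
    simp [he_def]
end
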